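/- For the N-qubit GHZ state subjected to N-fold local dephasing with parameter η ∈ [0,1), the logarithmic negativity across any bipartition equals log₂(1 + (1−η)^N); in particular it is strictly positive for η < 1 and tends to 0 as N → ∞ for fixed η ∈ (0,1). -/

import Mathlib

open scoped BigOperators
open Filter

/-- The N-qubit GHZ state after N-fold local dephasing with parameter η:
ρ = ½(|0^N⟩⟨0^N| + |1^N⟩⟨1^N| + (1−η)^N (|0^N⟩⟨1^N| + |1^N⟩⟨0^N|)). -/
noncomputable def dephasedGHZ (N : ℕ) (η : ℝ) :
    Matrix (Fin N → Fin 2) (Fin N → Fin 2) ℂ :=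
  fun b b' =>
    if (b = fun _ => 0) ∧ (b' = fun _ => 0) ∨ (b = fun _ => 1) ∧ (b' = fun _ => 1)
    then (1 / 2 : ℂ)
    else if (b = fun _ => 0) ∧ (b' = fun _ => 1) ∨ (b = fun _ => 1) ∧ (b' = fun _ => 0)
    then (((1 - η) ^ N : ℝ) : ℂ) / 2
    else 0

/-- Partial transpose on the first m qubits (an m vs N−m bipartition). -/
noncomputable def partialTranspose (N m : ℕ)
    (ρ : Matrix (Fin N → Fin 2) (Fin N → Fin 2) ℂ) :
    Matrix (Fin N → Fin 2) (Fin N → Fin 2) ℂ :=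
  fun b b' => ρ (fun i => if (i : ℕ) < m then b' i else b i)
    (fun i => if (i : ℕ) < m then b i else b' i)

section Aux

open Polynomial Matrix

/-- all-zeros basis vector -/
def ghzB0 (N : ℕ) : Fin N → Fin 2 := fun _ => 0
/-- all-ones basis vector -/
def ghzB1 (N : ℕ) : Fin N → Fin 2 := fun _ => 1
/-- ones on the first m -/
def ghzBx (N m : ℕ) : Fin N → Fin 2 := fun i => if (i : ℕ) < m then 1 else 0
/-- zeros on the first m -/
def ghzBy (N m : ℕ) : Fin N → Fin 2 := fun i => if (i : ℕ) < m then 0 else 1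

/-- explicit form of the partial transpose of the dephased GHZ state -/
noncomputable def ghzM (N m : ℕ) (r : ℝ) :
    Matrix (Fin N → Fin 2) (Fin N → Fin 2) ℂ :=
  fun b b' =>
    if (b = ghzB0 N ∧ b' = ghzB0 N) ∨ (b = ghzB1 N ∧ b' = ghzB1 N) then (1/2 : ℂ)
    else if (b = ghzBx N m ∧ b' = ghzBy N m) ∨ (b = ghzBy N m ∧ b' = ghzBx N m)
    then ((r : ℂ)/2) else 0

/-- diagonal entries of the square -/
noncomputable def ghzD (N m : ℕ) (r : ℝ) : (Fin N → Fin 2) → ℝ :=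
  fun b => if b = ghzB0 N ∨ b = ghzB1 N then (1/4 : ℝ)
    else if b = ghzBx N m ∨ b = ghzBy N m then (r/2)^2 else 0

theorem ghz_keymix (N m : ℕ) (b b' c1 c2 : Fin N → Fin 2) :
    ((fun i : Fin N => if (i : ℕ) < m then b' i else b i) = c1 ∧
      (fun i : Fin N => if (i : ℕ) < m then b i else b' i) = c2) ↔
    ((b = fun i : Fin N => if (i : ℕ) < m then c2 i else c1 i) ∧
      (b' = fun i : Fin N => if (i : ℕ) < m then c1 i else c2 i)) := by
  simp only [funext_iff]
  constructor
  · rintro ⟨h1, h2⟩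
    constructor <;> intro i <;> by_cases h : (i : ℕ) < m
    · have := h2 i; simpa [h] using this
    · have := h1 i; simpa [h] using this
    · have := h1 i; simpa [h] using this
    · have := h2 i; simpa [h] using this
  · rintro ⟨h1, h2⟩
    constructor <;> intro i <;> by_cases h : (i : ℕ) < m
    · have := h2 i; simpa [h] using this
    · have := h1 i; simpa [h] using this
    · have := h1 i; simpa [h] using this
    · have := h2 i; simpa [h] using this

theorem ghz_pt_eq (N m : ℕ) (η : ℝ) :
    partialTranspose N m (dephasedGHZ N η) = ghzM N m ((1 - η)^N) := by
  funext b b'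
  show dephasedGHZ N η _ _ = _
  unfold dephasedGHZ ghzM
  refine if_congr ?_ rfl (if_congr ?_ rfl rfl)
  · constructor
    · rintro (h | h)
      · left
        have := (ghz_keymix N m b b' (ghzB0 N) (ghzB0 N)).mp h
        simp [ghzB0, ite_self] at this; exact this
      · right
        have := (ghz_keymix N m b b' (ghzB1 N) (ghzB1 N)).mp h
        simp [ghzB1, ite_self] at this; exact this
    · rintro (⟨h1, h2⟩ | ⟨h1, h2⟩)
      · left
        exact (ghz_keymix N m b b' (ghzB0 N) (ghzB0 N)).mpr
          (by simp [ghzB0, ite_self]; exact ⟨h1, h2⟩)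
      · right
        exact (ghz_keymix N m b b' (ghzB1 N) (ghzB1 N)).mpr
          (by simp [ghzB1, ite_self]; exact ⟨h1, h2⟩)
  · constructor
    · rintro (h | h)
      · left
        have := (ghz_keymix N m b b' (ghzB0 N) (ghzB1 N)).mp h
        simp [ghzB0, ghzB1, ghzBx, ghzBy] at this; exact this
      · right
        have := (ghz_keymix N m b b' (ghzB1 N) (ghzB0 N)).mp h
        simp [ghzB0, ghzB1, ghzBx, ghzBy] at this; exact this
    · rintro (⟨h1, h2⟩ | ⟨h1, h2⟩)
      · left
        exact (ghz_keymix N m b b' (ghzB0 N) (ghzB1 N)).mpr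
          (by simp [ghzB0, ghzB1, ghzBx, ghzBy]; exact ⟨h1, h2⟩)
      · right
        exact (ghz_keymix N m b b' (ghzB1 N) (ghzB0 N)).mpr
          (by simp [ghzB0, ghzB1, ghzBx, ghzBy]; exact ⟨h1, h2⟩)

theorem ghzM_isHermitian (N m : ℕ) (r : ℝ) : (ghzM N m r).IsHermitian := by
  rw [Matrix.IsHermitian]
  funext b b'
  rw [Matrix.conjTranspose_apply]
  have h : ghzM N m r b' b = ghzM N m r b b' := by
    unfold ghzM
    exact if_congr (by tauto) rfl (if_congr (by tauto) rfl rfl)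
  rw [h]
  unfold ghzM
  split_ifs <;> simp [Complex.ext_iff]
section Part2
open Polynomial Matrix

variable (N m : ℕ)

theorem ghz_distinct (hN : 1 ≤ N) (hm1 : 1 ≤ m) (hm2 : m ≤ N - 1) :
    ghzB0 N ≠ ghzB1 N ∧ ghzB0 N ≠ ghzBx N m ∧ ghzB0 N ≠ ghzBy N m ∧
    ghzB1 N ≠ ghzBx N m ∧ ghzB1 N ≠ ghzBy N m ∧ ghzBx N m ≠ ghzBy N m := by
  have hmN : m < N := by omega
  have h0m : (0 : ℕ) < m := hm1
  have hNm : ¬ (N - 1 < m) := by omega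
  set i0 : Fin N := ⟨0, by omega⟩
  set iN : Fin N := ⟨N - 1, by omega⟩
  refine ⟨fun h => ?_, fun h => ?_, fun h => ?_, fun h => ?_, fun h => ?_, fun h => ?_⟩
  · have := congrFun h i0; simp [ghzB0, ghzB1] at this
  · have := congrFun h i0; simp [ghzB0, ghzBx, i0, h0m] at this
  · have := congrFun h iN; simp [ghzB0, ghzBy, iN, hNm] at this
  · have := congrFun h iN; simp [ghzB1, ghzBx, iN, hNm] at this
  · have := congrFun h i0; simp [ghzB1, ghzBy, i0, h0m] at this
  · have := congrFun h i0; simp [ghzBx, ghzBy, i0, h0m] at this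

variable {N m} (r : ℝ)

theorem ghzM_mul_self (hN : 1 ≤ N) (hm1 : 1 ≤ m) (hm2 : m ≤ N - 1) :
    ghzM N m r * ghzM N m r = Matrix.diagonal (fun b => ((ghzD N m r b : ℝ) : ℂ)) := by
  obtain ⟨h01, h0x, h0y, h1x, h1y, hxy⟩ := ghz_distinct N m hN hm1 hm2
  -- row lemmas
  have row0 : ∀ b', ghzM N m r (ghzB0 N) b' = if ghzB0 N = b' then (1/2 : ℂ) else 0 := by
    intro b'; unfold ghzM
    by_cases hb : b' = ghzB0 N
    · simp [hb]
    · rw [if_neg (by tauto), if_neg (by tauto), if_neg (by rintro rfl; exact hb rfl)]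
  have row1 : ∀ b', ghzM N m r (ghzB1 N) b' = if ghzB1 N = b' then (1/2 : ℂ) else 0 := by
    intro b'; unfold ghzM
    by_cases hb : b' = ghzB1 N
    · simp [hb, h01.symm]
    · rw [if_neg (by tauto), if_neg (by tauto), if_neg (by rintro rfl; exact hb rfl)]
  have rowx : ∀ b', ghzM N m r (ghzBx N m) b' = if ghzBy N m = b' then ((r:ℂ)/2) else 0 := by
    intro b'; unfold ghzM
    by_cases hb : b' = ghzBy N m
    · rw [if_neg (by rintro (⟨h,-⟩|⟨h,-⟩); exacts [h0x h.symm, h1x h.symm]),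
        if_pos (Or.inl ⟨rfl, hb⟩), if_pos hb.symm]
    · rw [if_neg (by rintro (⟨h,-⟩|⟨h,-⟩); exacts [h0x h.symm, h1x h.symm]),
        if_neg (by rintro (⟨-,h⟩|⟨h,-⟩); exacts [hb h, hxy h]),
        if_neg (by rintro rfl; exact hb rfl)]
  have rowy : ∀ b', ghzM N m r (ghzBy N m) b' = if ghzBx N m = b' then ((r:ℂ)/2) else 0 := by
    intro b'; unfold ghzM
    by_cases hb : b' = ghzBx N m
    · rw [if_neg (by rintro (⟨h,-⟩|⟨h,-⟩); exacts [h0y h.symm, h1y h.symm]),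
        if_pos (Or.inr ⟨rfl, hb⟩), if_pos hb.symm]
    · rw [if_neg (by rintro (⟨h,-⟩|⟨h,-⟩); exacts [h0y h.symm, h1y h.symm]),
        if_neg (by rintro (⟨h,-⟩|⟨-,h⟩); exacts [hxy h.symm, hb h]),
        if_neg (by rintro rfl; exact hb rfl)]
  have rowz : ∀ b, b ≠ ghzB0 N → b ≠ ghzB1 N → b ≠ ghzBx N m → b ≠ ghzBy N m →
      ∀ b', ghzM N m r b b' = 0 := by
    intro b hb0 hb1 hbx hby b'; unfold ghzM
    rw [if_neg (by tauto), if_neg (by tauto)]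
  funext b b''
  rw [Matrix.mul_apply]
  by_cases hb0 : b = ghzB0 N
  · subst hb0
    rw [Finset.sum_congr rfl (fun b' _ => by
      rw [row0 b', ite_mul, zero_mul]), Finset.sum_ite_eq, if_pos (Finset.mem_univ _), row0]
    by_cases hb'' : ghzB0 N = b''
    · rw [← hb'', if_pos rfl, Matrix.diagonal_apply_eq]
      simp [ghzD]
      norm_num
    · rw [if_neg hb'', mul_zero, Matrix.diagonal_apply_ne' _ (fun h => hb'' h.symm)]
  · by_cases hb1 : b = ghzB1 N
    · subst hb1
      rw [Finset.sum_congr rfl (fun b' _ => by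
        rw [row1 b', ite_mul, zero_mul]), Finset.sum_ite_eq, if_pos (Finset.mem_univ _), row1]
      by_cases hb'' : ghzB1 N = b''
      · rw [← hb'', if_pos rfl, Matrix.diagonal_apply_eq]
        simp [ghzD]
        norm_num
      · rw [if_neg hb'', mul_zero, Matrix.diagonal_apply_ne' _ (fun h => hb'' h.symm)]
    · by_cases hbx : b = ghzBx N m
      · subst hbx
        rw [Finset.sum_congr rfl (fun b' _ => by
          rw [rowx b', ite_mul, zero_mul]), Finset.sum_ite_eq, if_pos (Finset.mem_univ _), rowy]
        by_cases hb'' : ghzBx N m = b''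
        · rw [← hb'', if_pos rfl, Matrix.diagonal_apply_eq]
          simp [ghzD, Ne.symm h0x, Ne.symm h1x]
          ring
        · rw [if_neg hb'', Matrix.diagonal_apply_ne' _ (fun h => hb'' h.symm), mul_zero]
      · by_cases hby : b = ghzBy N m
        · subst hby
          rw [Finset.sum_congr rfl (fun b' _ => by
            rw [rowy b', ite_mul, zero_mul]), Finset.sum_ite_eq, if_pos (Finset.mem_univ _), rowx]
          by_cases hb'' : ghzBy N m = b''
          · rw [← hb'', if_pos rfl, Matrix.diagonal_apply_eq]
            simp [ghzD, Ne.symm h0y, Ne.symm h1y]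
            ring
          · rw [if_neg hb'', Matrix.diagonal_apply_ne' _ (fun h => hb'' h.symm), mul_zero]
        · rw [Finset.sum_congr rfl (fun b' _ => by rw [rowz b hb0 hb1 hbx hby b', zero_mul]),
            Finset.sum_const_zero]
          by_cases hb'' : b = b''
          · rw [← hb'', Matrix.diagonal_apply_eq]
            unfold ghzD
            rw [if_neg (by tauto), if_neg (by tauto)]
            norm_num
          · rw [Matrix.diagonal_apply_ne _ hb'']
end Part2
section Part3
open Polynomial Matrix

theorem ghz_charpoly_conj {n : Type*} [Fintype n] [DecidableEq n] (V W B : Matrix n n ℂ)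
    (h1 : V * W = 1) (h2 : W * V = 1) : (V * B * W).charpoly = B.charpoly := by
  unfold Matrix.charpoly
  have hVW : (C.mapMatrix V) * (C.mapMatrix W) = (1 : Matrix n n ℂ[X]) := by
    rw [← _root_.map_mul _ _ _, h1, _root_.map_one]
  have hWV : (C.mapMatrix W) * (C.mapMatrix V) = (1 : Matrix n n ℂ[X]) := by
    rw [← _root_.map_mul _ _ _, h2, _root_.map_one]
  have hc : charmatrix (V * B * W) = (C.mapMatrix V) * charmatrix B * (C.mapMatrix W) := by
    unfold charmatrix
    rw [_root_.map_mul, _root_.map_mul, Matrix.mul_sub, Matrix.sub_mul]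
    congr 1
    rw [← (Matrix.scalar_commute X (Commute.all X) (C.mapMatrix V)).eq, mul_assoc, hVW, mul_one]
  rw [hc, Matrix.det_mul, Matrix.det_mul, mul_comm, ← mul_assoc, ← Matrix.det_mul, hWV,
    Matrix.det_one, one_mul]

theorem ghz_charpoly_diagonal {n : Type*} [Fintype n] [DecidableEq n] (v : n → ℂ) :
    (Matrix.diagonal v).charpoly = ∏ i, (X - C (v i)) := by
  rw [Matrix.charpoly]
  have h : charmatrix (Matrix.diagonal v) = Matrix.diagonal (fun i => (X : ℂ[X]) - C (v i)) := by
    funext i j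
    by_cases h : i = j
    · subst h; simp [charmatrix_apply_eq]
    · simp [charmatrix_apply_ne _ _ _ h, Matrix.diagonal_apply_ne _ h]
  rw [h, Matrix.det_diagonal]

/-- key multiset identity: the eigenvalue squares match the diagonal of the square. -/
theorem ghz_eig_multiset {n : Type*} [Fintype n] [DecidableEq n]
    {A : Matrix n n ℂ} (hA : A.IsHermitian) (d : n → ℂ)
    (hsq : A * A = Matrix.diagonal d) :
    Multiset.map (fun i => ((hA.eigenvalues i : ℝ) : ℂ) * ((hA.eigenvalues i : ℝ) : ℂ))
        Finset.univ.val =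
      Multiset.map d Finset.univ.val := by
  classical
  set V : Matrix n n ℂ := (hA.eigenvectorUnitary : Matrix n n ℂ) with hV
  have hU1 : V * star V = 1 := (Matrix.mem_unitaryGroup_iff).mp (hA.eigenvectorUnitary).2
  have hU2 : star V * V = 1 := (Matrix.mem_unitaryGroup_iff').mp (hA.eigenvectorUnitary).2
  have hdiag : star V * A * V = Matrix.diagonal (RCLike.ofReal ∘ hA.eigenvalues) :=
    by have := hA.conjStarAlgAut_star_eigenvectorUnitary
       rw [Unitary.conjStarAlgAut_star_apply] at this; exact this
  have hsq2 : Matrix.diagonal (fun i => ((hA.eigenvalues i : ℝ) : ℂ) * ((hA.eigenvalues i : ℝ) : ℂ))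
      = star V * Matrix.diagonal d * V := by
    rw [← hsq, ← Matrix.diagonal_mul_diagonal]
    have : Matrix.diagonal (fun i => ((hA.eigenvalues i : ℝ) : ℂ)) =
        Matrix.diagonal (RCLike.ofReal ∘ hA.eigenvalues) := rfl
    rw [this, ← hdiag]
    simp only [Matrix.mul_assoc]
    rw [← Matrix.mul_assoc V (star V) (A * V), hU1, Matrix.one_mul]
  have hcp : (Matrix.diagonal (fun i => ((hA.eigenvalues i : ℝ) : ℂ) *
      ((hA.eigenvalues i : ℝ) : ℂ))).charpoly = (Matrix.diagonal d).charpoly := by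
    rw [hsq2, ghz_charpoly_conj (star V) V _ hU2 hU1]
  rw [ghz_charpoly_diagonal, ghz_charpoly_diagonal] at hcp
  have hr1 := congrArg Polynomial.roots hcp
  rwa [Finset.prod_eq_multiset_prod, Finset.prod_eq_multiset_prod,
    show Multiset.map (fun i => X - C (((hA.eigenvalues i : ℝ) : ℂ) * ((hA.eigenvalues i : ℝ) : ℂ)))
        Finset.univ.val = Multiset.map (fun a => X - C a)
        (Multiset.map (fun i => ((hA.eigenvalues i : ℝ) : ℂ) * ((hA.eigenvalues i : ℝ) : ℂ))
          Finset.univ.val) by rw [Multiset.map_map]; rfl,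
    show Multiset.map (fun i => X - C (d i)) Finset.univ.val
        = Multiset.map (fun a => X - C a) (Multiset.map d Finset.univ.val) by
      rw [Multiset.map_map]; rfl,
    Polynomial.roots_multiset_prod_X_sub_C, Polynomial.roots_multiset_prod_X_sub_C] at hr1
end Part3
end Aux

/-- For the dephased GHZ state with η ∈ [0,1), the logarithmic negativity across any
bipartition, log₂ of the trace norm (sum of absolute values of the eigenvalues) of
the partial transpose, equals log₂(1 + (1−η)^N); it is strictly positive for η < 1,
and for fixed η ∈ (0,1) it tends to 0 as N → ∞. -/
theorem dephased_ghz_logneg (N m : ℕ) (hN : 1 ≤ N) (hm1 : 1 ≤ m) (hm2 : m ≤ N - 1)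
    (η : ℝ) (hη0 : 0 ≤ η) (hη1 : η < 1) :
    (∃ h : (partialTranspose N m (dephasedGHZ N η)).IsHermitian,
      Real.logb 2 (∑ b : Fin N → Fin 2, |h.eigenvalues b|) =
        Real.logb 2 (1 + (1 - η) ^ N)) ∧
    0 < Real.logb 2 (1 + (1 - η) ^ N) ∧
    (∀ η' : ℝ, 0 < η' → η' < 1 →
      Tendsto (fun n : ℕ => Real.logb 2 (1 + (1 - η') ^ n)) atTop (nhds 0)) := by
  set r : ℝ := (1 - η) ^ N with hrdef
  have hr : 0 ≤ r := pow_nonneg (by linarith) N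
  have hA : (partialTranspose N m (dephasedGHZ N η)).IsHermitian := by
    rw [ghz_pt_eq]; exact ghzM_isHermitian N m _
  refine ⟨⟨hA, ?_⟩, ?_, ?_⟩
  · -- main eigenvalue sum computation
    have hms := ghz_eig_multiset hA (fun b => ((ghzD N m r b : ℝ) : ℂ))
      (by rw [ghz_pt_eq]; exact ghzM_mul_self r hN hm1 hm2)
    have h2 := congrArg (Multiset.map (fun z : ℂ => Real.sqrt z.re)) hms
    rw [Multiset.map_map, Multiset.map_map] at h2
    have hsum : ∑ b : Fin N → Fin 2, |hA.eigenvalues b| =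
        ∑ b : Fin N → Fin 2, Real.sqrt (ghzD N m r b) := by
      calc ∑ b : Fin N → Fin 2, |hA.eigenvalues b|
          = ∑ b : Fin N → Fin 2, ((fun z : ℂ => Real.sqrt z.re) ∘
              (fun i => ((hA.eigenvalues i : ℝ) : ℂ) * ((hA.eigenvalues i : ℝ) : ℂ))) b :=
            Finset.sum_congr rfl (fun b _ => by
              simp only [Function.comp_apply, ← Complex.ofReal_mul, Complex.ofReal_re,
                Real.sqrt_mul_self_eq_abs])
        _ = (Multiset.map ((fun z : ℂ => Real.sqrt z.re) ∘
              (fun i => ((hA.eigenvalues i : ℝ) : ℂ) * ((hA.eigenvalues i : ℝ) : ℂ)))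
              Finset.univ.val).sum := Finset.sum_eq_multiset_sum _ _
        _ = (Multiset.map ((fun z : ℂ => Real.sqrt z.re) ∘
              (fun b => ((ghzD N m r b : ℝ) : ℂ))) Finset.univ.val).sum := by rw [h2]
        _ = ∑ b : Fin N → Fin 2, Real.sqrt (ghzD N m r b) := by
            rw [← Finset.sum_eq_multiset_sum]
            exact Finset.sum_congr rfl (fun b _ => by
              simp only [Function.comp_apply, Complex.ofReal_re])
    obtain ⟨h01, h0x, h0y, h1x, h1y, hxy⟩ := ghz_distinct N m hN hm1 hm2
    have hpt : ∀ b : Fin N → Fin 2, Real.sqrt (ghzD N m r b) =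
        (if ghzB0 N = b then (1/2 : ℝ) else 0) + (if ghzB1 N = b then (1/2 : ℝ) else 0) +
        (if ghzBx N m = b then r/2 else 0) + (if ghzBy N m = b then r/2 else 0) := by
      intro b
      unfold ghzD
      by_cases h0 : b = ghzB0 N
      · rw [if_pos (Or.inl h0), h0, if_pos rfl, if_neg (Ne.symm h01), if_neg (Ne.symm ?_),
          if_neg (Ne.symm ?_)]
        · rw [show (1/4 : ℝ) = (1/2)^2 by norm_num, Real.sqrt_sq (by norm_num)]; ring
        · exact h0y
        · exact h0x
      · by_cases h1 : b = ghzB1 N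
        · rw [if_pos (Or.inr h1), h1, if_pos rfl, if_neg h01, if_neg (Ne.symm ?_),
            if_neg (Ne.symm ?_)]
          · rw [show (1/4 : ℝ) = (1/2)^2 by norm_num, Real.sqrt_sq (by norm_num)]; ring
          · exact h1y
          · exact h1x
        · rw [if_neg (by tauto)]
          by_cases hx : b = ghzBx N m
          · rw [if_pos (Or.inl hx), hx, if_pos rfl, if_neg h0x, if_neg h1x,
              if_neg (Ne.symm hxy), Real.sqrt_sq (by linarith)]
            ring
          · by_cases hy : b = ghzBy N m
            · rw [if_pos (Or.inr hy), hy, if_pos rfl, if_neg h0y, if_neg h1y, if_neg hxy,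
                Real.sqrt_sq (by linarith)]
              ring
            · rw [if_neg (by tauto), if_neg (fun h => h0 h.symm), if_neg (fun h => h1 h.symm),
                if_neg (fun h => hx h.symm), if_neg (fun h => hy h.symm), Real.sqrt_zero]
              ring
    have hval : ∑ b : Fin N → Fin 2, Real.sqrt (ghzD N m r b) = 1 + r := by
      rw [Finset.sum_congr rfl (fun b _ => hpt b)]
      rw [Finset.sum_add_distrib, Finset.sum_add_distrib, Finset.sum_add_distrib,
        Finset.sum_ite_eq, Finset.sum_ite_eq, Finset.sum_ite_eq, Finset.sum_ite_eq]
      simp only [Finset.mem_univ, if_pos]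
      ring
    rw [hsum, hval]
  · have hpow : (0 : ℝ) < (1 - η) ^ N := pow_pos (by linarith) N
    exact Real.logb_pos one_lt_two (by linarith)
  · intro η' h1 h2
    have h3 : Tendsto (fun n : ℕ => (1 - η') ^ n) atTop (nhds 0) :=
      tendsto_pow_atTop_nhds_zero_of_lt_one (by linarith) (by linarith)
    have h4 : Tendsto (fun n : ℕ => 1 + (1 - η') ^ n) atTop (nhds 1) := by
      have := tendsto_const_nhds (x := (1 : ℝ)) (f := atTop (α := ℕ)) |>.add h3
      simpa using this
    have h5 : ContinuousAt (Real.logb 2) 1 := Real.continuousAt_logb one_ne_zero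
    have h6 := h5.tendsto.comp h4
    rw [Real.logb_one] at h6
    exact h6
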